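/- arXiv:2509.04994 — 4 statements merged into one kernel-verified Lean document; each statement's English description precedes it below -/
import Mathlib

section
/- For real α > 0 and real ξ, the integral ∫_{-∞}^{∞} e^{-iξx} (1 - tanh²x)^α dx equals 2^{2α-1} B(α + iξ/2, α - iξ/2), where B denotes the Beta function extended to complex arguments with positive real part via B(a,b) = Γ(a)Γ(b)/Γ(a+b). -/
open MeasureTheory

noncomputable def gmap (x : ℝ) : ℝ := Real.exp (2*x) / (Real.exp (2*x) + 1)

lemma gmap_pos (x : ℝ) : 0 < gmap x :=
  div_pos (Real.exp_pos _) (by positivity)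

lemma gmap_lt_one (x : ℝ) : gmap x < 1 :=
  (div_lt_one (by positivity)).2 (by linarith)

lemma gmap_exp_mul (x : ℝ) : Real.exp (2*x) * (1 - gmap x) = gmap x := by
  have h : Real.exp (2*x) + 1 ≠ 0 := by positivity
  rw [gmap]
  field_simp
  ring

lemma gmap_hasDerivAt (x : ℝ) : HasDerivAt gmap (2 * gmap x * (1 - gmap x)) x := by
  have hE : HasDerivAt (fun x : ℝ => Real.exp (2*x)) (Real.exp (2*x) * 2) x := by
    simpa using ((hasDerivAt_id x).const_mul 2).exp
  have hD : HasDerivAt (fun x : ℝ => Real.exp (2*x) + 1) (Real.exp (2*x) * 2) x :=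
    hE.add_const 1
  have hne : Real.exp (2*x) + 1 ≠ 0 := by positivity
  have := hE.div hD hne
  convert this using 1
  have hne2 : (Real.exp (2*x) + 1)^2 ≠ 0 := by positivity
  · rfl
  · rfl
  · rfl
  rw [gmap]
  field_simp

lemma gmap_strictMono : StrictMono gmap := by
  intro x y h
  have hx := Real.exp_pos (2*x)
  have hy := Real.exp_pos (2*y)
  have hlt : Real.exp (2*x) < Real.exp (2*y) := Real.exp_lt_exp.2 (by linarith)
  rw [gmap, gmap, div_lt_div_iff₀ (by positivity) (by positivity)]
  nlinarith

lemma gmap_image : gmap '' Set.univ = Set.Ioo 0 1 := by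
  apply Set.eq_of_subset_of_subset
  · rintro u ⟨x, -, rfl⟩
    exact ⟨gmap_pos x, gmap_lt_one x⟩
  · rintro u ⟨h0, h1⟩
    refine ⟨Real.log (u/(1-u)) / 2, trivial, ?_⟩
    have hv : 0 < 1 - u := by linarith
    have he : Real.exp (2 * (Real.log (u/(1-u)) / 2)) = u / (1-u) := by
      rw [show 2 * (Real.log (u/(1-u)) / 2) = Real.log (u/(1-u)) by ring,
        Real.exp_log (by positivity)]
    rw [gmap, he]
    field_simp
    ring

lemma one_sub_tanh_sq (x : ℝ) : 1 - Real.tanh x ^ 2 = 4 * gmap x * (1 - gmap x) := by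
  have hx := Real.exp_pos x
  have h2 : Real.exp (2*x) = Real.exp x * Real.exp x := by
    rw [← Real.exp_add]; ring_nf
  have hnx : Real.exp (-x) = (Real.exp x)⁻¹ := Real.exp_neg x
  have hc : Real.exp x + Real.exp (-x) ≠ 0 := by positivity
  rw [Real.tanh_eq_sinh_div_cosh, Real.sinh_eq, Real.cosh_eq, gmap, h2, hnx]
  have hden : Real.exp x * Real.exp x + 1 ≠ 0 := by positivity
  field_simp
  ring

/-- The Beta function extended to complex arguments with positive real part. -/
noncomputable def cBeta (a b : ℂ) : ℂ := Complex.Gamma a * Complex.Gamma b / Complex.Gamma (a + b)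

theorem stmt_0 (α ξ : ℝ) (hα : 0 < α) :
    (∫ x : ℝ, Complex.exp (-Complex.I * ξ * x) * (((1 - Real.tanh x ^ 2) ^ α : ℝ) : ℂ))
      = (2 : ℂ) ^ ((2 * α - 1 : ℝ) : ℂ) *
        cBeta ((α : ℂ) + Complex.I * ξ / 2) ((α : ℂ) - Complex.I * ξ / 2) := by
  set a : ℂ := (α : ℂ) - Complex.I * ξ / 2 with ha_def
  set b : ℂ := (α : ℂ) + Complex.I * ξ / 2 with hb_def
  have ha : 0 < a.re := by
    rw [ha_def]; simp [Complex.div_re]; exact hα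
  have hb : 0 < b.re := by
    rw [hb_def]; simp [Complex.div_re]; exact hα
  -- key pointwise identity
  have key : ∀ x : ℝ,
      Complex.exp (-Complex.I * ξ * x) * (((1 - Real.tanh x ^ 2) ^ α : ℝ) : ℂ)
        = (2 : ℂ) ^ ((2 * α - 1 : ℝ) : ℂ) *
          (|2 * gmap x * (1 - gmap x)| •
            ((gmap x : ℂ) ^ (a - 1) * (1 - (gmap x : ℂ)) ^ (b - 1))) := by
    intro x
    have hu : 0 < gmap x := gmap_pos x
    have hv : 0 < 1 - gmap x := by have := gmap_lt_one x; linarith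
    set u := gmap x with hu_def
    set Lu := Real.log u with hLu_def
    set Lv := Real.log (1 - u) with hLv_def
    have hLu : (Lu : ℂ) = 2 * x + Lv := by
      have h1 : Lu = 2 * x + Lv := by
        rw [hLu_def, hLv_def, hu_def]
        conv_lhs => rw [← gmap_exp_mul x]
        rw [Real.log_mul (Real.exp_ne_zero _) (by rw [hu_def] at hv; exact hv.ne'),
          Real.log_exp]
      exact_mod_cast congrArg (Complex.ofReal) h1
    have hcu : (u : ℂ) = Complex.exp (Lu : ℂ) := by
      rw [← Complex.ofReal_exp, hLu_def, Real.exp_log hu]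
    have hcv : ((1 - u : ℝ) : ℂ) = Complex.exp (Lv : ℂ) := by
      rw [← Complex.ofReal_exp, hLv_def, Real.exp_log hv]
    have hc1 : (1 - (u : ℂ)) = ((1 - u : ℝ) : ℂ) := by push_cast; ring
    have hlog4 : Real.log (4 * u * (1 - u)) = 2 * Real.log 2 + Lu + Lv := by
      rw [Real.log_mul (by positivity) hv.ne', Real.log_mul (by norm_num) hu.ne']
      have h4 : Real.log 4 = 2 * Real.log 2 := by
        rw [show (4 : ℝ) = 2 ^ (2 : ℕ) by norm_num, Real.log_pow]; norm_num
      rw [h4]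
    have e1 : (((1 - Real.tanh x ^ 2) ^ α : ℝ) : ℂ)
        = Complex.exp (((2 * Real.log 2 + Lu + Lv : ℝ) : ℂ) * α) := by
      rw [one_sub_tanh_sq, ← hu_def, Real.rpow_def_of_pos (by positivity), hlog4,
        Complex.ofReal_exp]
      push_cast
      ring_nf
    have e2 : (u : ℂ) ^ (a - 1) = Complex.exp ((Lu : ℂ) * (a - 1)) := by
      rw [Complex.cpow_def_of_ne_zero (by exact_mod_cast hu.ne'),
        hLu_def, Complex.ofReal_log hu.le]
    have e3 : (1 - (u : ℂ)) ^ (b - 1) = Complex.exp ((Lv : ℂ) * (b - 1)) := by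
      rw [hc1, Complex.cpow_def_of_ne_zero (by exact_mod_cast hv.ne'),
        hLv_def, Complex.ofReal_log hv.le]
    have e4 : (2 : ℂ) ^ ((2 * α - 1 : ℝ) : ℂ)
        = Complex.exp (((Real.log 2 : ℝ) : ℂ) * ((2 * α - 1 : ℝ) : ℂ)) := by
      rw [show (2 : ℂ) = ((2 : ℝ) : ℂ) by norm_num,
        Complex.cpow_def_of_ne_zero (by norm_num), Complex.ofReal_log (by norm_num)]
    have e5 : |2 * u * (1 - u)| = 2 * u * (1 - u) := abs_of_pos (by positivity)
    have hc2 : ((2 : ℝ) : ℂ) = Complex.exp (((Real.log 2 : ℝ) : ℂ)) := by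
      rw [← Complex.ofReal_exp, Real.exp_log two_pos]
    have e6 : ((2 * u * (1 - u) : ℝ) : ℂ)
        = Complex.exp (((Real.log 2 : ℝ) : ℂ)) * Complex.exp (Lu : ℂ) * Complex.exp (Lv : ℂ) := by
      rw [Complex.ofReal_mul, Complex.ofReal_mul, hc2, hcu, hcv]
    rw [e1, e2, e3, e4, e5, Complex.real_smul, e6]
    rw [← Complex.exp_add, ← Complex.exp_add, ← Complex.exp_add, ← Complex.exp_add,
      ← Complex.exp_add, ← Complex.exp_add]
    congr 1
    rw [ha_def, hb_def]
    push_cast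
    linear_combination (Complex.I * (ξ : ℂ) / 2) * hLu
  -- change of variables
  have hderiv : ∀ x ∈ (Set.univ : Set ℝ),
      HasDerivWithinAt gmap (2 * gmap x * (1 - gmap x)) Set.univ x :=
    fun x _ => (gmap_hasDerivAt x).hasDerivWithinAt
  have hinj : Set.InjOn gmap Set.univ := gmap_strictMono.injective.injOn
  have hchg := integral_image_eq_integral_abs_deriv_smul MeasurableSet.univ hderiv hinj
    (fun u : ℝ => (u : ℂ) ^ (a - 1) * (1 - (u : ℂ)) ^ (b - 1))
  rw [gmap_image] at hchg
  calc (∫ x : ℝ, Complex.exp (-Complex.I * ξ * x) * (((1 - Real.tanh x ^ 2) ^ α : ℝ) : ℂ))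
      = ∫ x : ℝ, (2 : ℂ) ^ ((2 * α - 1 : ℝ) : ℂ) *
          (|2 * gmap x * (1 - gmap x)| •
            ((gmap x : ℂ) ^ (a - 1) * (1 - (gmap x : ℂ)) ^ (b - 1))) := by
        exact integral_congr_ae (Filter.Eventually.of_forall key)
    _ = (2 : ℂ) ^ ((2 * α - 1 : ℝ) : ℂ) * ∫ x : ℝ,
          (|2 * gmap x * (1 - gmap x)| •
            ((gmap x : ℂ) ^ (a - 1) * (1 - (gmap x : ℂ)) ^ (b - 1))) :=
        integral_const_mul _ _
    _ = (2 : ℂ) ^ ((2 * α - 1 : ℝ) : ℂ) *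
          ∫ u in Set.Ioo (0:ℝ) 1, (u : ℂ) ^ (a - 1) * (1 - (u : ℂ)) ^ (b - 1) := by
        rw [← setIntegral_univ, ← hchg]
    _ = (2 : ℂ) ^ ((2 * α - 1 : ℝ) : ℂ) * Complex.betaIntegral a b := by
        rw [Complex.betaIntegral, intervalIntegral.integral_of_le zero_le_one,
          integral_Ioc_eq_integral_Ioo]
    _ = (2 : ℂ) ^ ((2 * α - 1 : ℝ) : ℂ) * cBeta b a := by
        have hab : 0 < (a + b).re := by rw [Complex.add_re]; linarith
        have hne := Complex.Gamma_ne_zero_of_re_pos hab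
        have hbeta := Complex.Gamma_mul_Gamma_eq_betaIntegral ha hb
        have hbi : Complex.betaIntegral a b
            = Complex.Gamma a * Complex.Gamma b / Complex.Gamma (a + b) := by
          field_simp
          linear_combination -hbeta
        rw [hbi, cBeta, add_comm b a]
        ring
end

section
/- For real ζ, η > 0 and real ξ, the integral ∫_{-∞}^{∞} e^{-iξt} (1 + tanh t)^ζ (1 - tanh t)^η dt equals 2^{ζ+η-1} Γ(ζ - iξ/2) Γ(η + iξ/2) / Γ(ζ + η). -/
open MeasureTheory


noncomputable def lgs (t : ℝ) : ℝ := (1 + Real.exp (-2*t))⁻¹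

lemma hden (t : ℝ) : (0:ℝ) < 1 + Real.exp (-2*t) := by positivity

lemma hx0 (t : ℝ) : 0 < lgs t := by unfold lgs; positivity

lemma hx1 (t : ℝ) : lgs t < 1 := by
  unfold lgs
  rw [inv_lt_one_iff₀]
  right; linarith [Real.exp_pos (-2*t)]

lemma h1mx (t : ℝ) : 1 - lgs t = Real.exp (-2*t) * lgs t := by
  unfold lgs
  have h2 : 1 + Real.exp (-2*t) ≠ 0 := (hden t).ne'
  field_simp
  ring

lemma htanh1 (t : ℝ) : 1 + Real.tanh t = 2 * lgs t := by
  have e3 : Real.exp t * Real.exp (-(2*t)) = Real.exp (-t) := by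
    rw [← Real.exp_add]; ring_nf
  unfold lgs
  rw [Real.tanh_eq_sinh_div_cosh, Real.sinh_eq, Real.cosh_eq]
  have h1 : Real.exp t + Real.exp (-t) ≠ 0 := by positivity
  have h2 : 1 + Real.exp (-2*t) ≠ 0 := (hden t).ne'
  field_simp
  have e4 : Real.exp (-(t*2)) = Real.exp (-(2*t)) := by ring_nf
  linear_combination 2 * e3 + (2 * Real.exp t) * e4

lemma htanh2 (t : ℝ) : 1 - Real.tanh t = 2 * (1 - lgs t) := by
  have h := htanh1 t
  nlinarith [h]

lemma lgs_deriv (t : ℝ) : HasDerivAt lgs (2 * Real.exp (-2*t) * (lgs t)^2) t := by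
  have h1 : HasDerivAt (fun t : ℝ => 1 + Real.exp (-2*t)) (Real.exp (-2*t) * (-2)) t := by
    have := (Real.hasDerivAt_exp (-2*t)).comp t (((hasDerivAt_id t).const_mul (-2)))
    simpa using this.const_add 1
  have := h1.inv (hden t).ne'
  convert this using 1
  · rfl
  · rfl
  · rfl
  unfold lgs
  field_simp

lemma lgs_inj : Function.Injective lgs := by
  intro a b hab
  unfold lgs at hab
  have := inv_injective hab
  have h2 : Real.exp (-2*a) = Real.exp (-2*b) := by linarith
  have := Real.exp_injective h2
  linarith

lemma lgs_range : Set.range lgs = Set.Ioo 0 1 := by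
  ext y
  constructor
  · rintro ⟨t, rfl⟩; exact ⟨hx0 t, hx1 t⟩
  · rintro ⟨hy0, hy1⟩
    refine ⟨-Real.log (y⁻¹ - 1) / 2, ?_⟩
    have hy' : 0 < y⁻¹ - 1 := by
      have : 1 < y⁻¹ := (one_lt_inv₀ hy0).mpr hy1
      linarith
    unfold lgs
    rw [show -2 * (-Real.log (y⁻¹ - 1) / 2) = Real.log (y⁻¹ - 1) by ring,
      Real.exp_log hy']
    field_simp
    ring

lemma cpow_exp_real (a : ℝ) (w : ℂ) :
    ((Real.exp a : ℝ) : ℂ) ^ w = Complex.exp (a * w) := by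
  rw [Complex.cpow_def_of_ne_zero (by exact_mod_cast (Real.exp_pos a).ne'),
    ← Complex.ofReal_log (Real.exp_pos a).le, Real.log_exp]

lemma hexp (ξ t : ℝ) :
    Complex.exp (-Complex.I * ξ * t) =
      ((lgs t : ℝ) : ℂ) ^ (-(Complex.I * ξ / 2)) *
      (((1 - lgs t : ℝ)) : ℂ) ^ (Complex.I * ξ / 2) := by
  set c : ℂ := Complex.I * ξ / 2 with hc
  have hxne : ((lgs t : ℝ) : ℂ) ≠ 0 := by exact_mod_cast (hx0 t).ne'
  have h1 : (((1 - lgs t : ℝ)) : ℂ) ^ c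
      = ((Real.exp (-2*t) : ℝ) : ℂ) ^ c * ((lgs t : ℝ) : ℂ) ^ c := by
    rw [h1mx t, Complex.ofReal_mul, Complex.mul_cpow_ofReal_nonneg (Real.exp_pos _).le (hx0 t).le]
  have hne : ((lgs t : ℝ) : ℂ) ^ c ≠ 0 := by
    intro h
    exact hxne (Complex.cpow_eq_zero_iff _ _ |>.mp h).1
  rw [h1, Complex.cpow_neg, cpow_exp_real]
  have h2 : ((((lgs t : ℝ) : ℂ) ^ c)⁻¹) * (Complex.exp (((-2*t : ℝ):ℂ) * c) * ((lgs t : ℝ) : ℂ) ^ c)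
      = Complex.exp (((-2*t : ℝ):ℂ) * c) := by
    field_simp
  rw [h2]
  congr 1
  push_cast
  ring

lemma cpow_helper (z : ℂ) (hz : z ≠ 0) (a b : ℂ) :
    z ^ (a + b - 1) * z = z ^ a * z ^ b := by
  have h1 : z ^ (a + b - 1) * z = z ^ (a + b - 1) * z ^ (1:ℂ) := by
    rw [Complex.cpow_one]
  rw [h1, ← Complex.cpow_add _ _ hz, ← Complex.cpow_add _ _ hz]
  congr 1
  ring

lemma key (ζ η ξ t : ℝ) :
    Complex.exp (-Complex.I * ξ * t) * (((1 + Real.tanh t) ^ ζ : ℝ) : ℂ) *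
        (((1 - Real.tanh t) ^ η : ℝ) : ℂ)
      = (2:ℂ)^((ζ+η-1:ℝ):ℂ) *
        ((|2 * Real.exp (-2*t) * (lgs t)^2| : ℝ) •
          (((lgs t : ℝ):ℂ)^((ζ:ℂ) - Complex.I*ξ/2 - 1) *
           (((1 - lgs t : ℝ)):ℂ)^((η:ℂ) + Complex.I*ξ/2 - 1))) := by
  have hx0' := hx0 t
  have hx1' := hx1 t
  have hy0' : (0:ℝ) < 1 - lgs t := by linarith
  have hXne : ((lgs t : ℝ) : ℂ) ≠ 0 := by exact_mod_cast hx0'.ne'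
  have hYne : (((1 - lgs t : ℝ)) : ℂ) ≠ 0 := by exact_mod_cast hy0'.ne'
  have habs : |2 * Real.exp (-2*t) * (lgs t)^2| = 2 * (lgs t) * (1 - lgs t) := by
    rw [abs_of_pos (by positivity), h1mx t]; ring
  rw [htanh1 t, htanh2 t, Real.mul_rpow (by norm_num) hx0'.le,
    Real.mul_rpow (by norm_num) hy0'.le,
    hexp ξ t, habs, Complex.real_smul]
  rw [Complex.ofReal_mul, Complex.ofReal_mul,
    Complex.ofReal_cpow (by norm_num : (0:ℝ) ≤ 2) ζ,
    Complex.ofReal_cpow (by norm_num : (0:ℝ) ≤ 2) η,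
    Complex.ofReal_cpow hx0'.le, Complex.ofReal_cpow hy0'.le]
  push_cast
  have e2 : (2:ℂ) ^ ((ζ:ℂ)+(η:ℂ)-1) * 2 = (2:ℂ)^(ζ:ℂ) * (2:ℂ)^(η:ℂ) :=
    cpow_helper 2 two_ne_zero _ _
  have eX : ((lgs t : ℂ)) ^ ((ζ:ℂ) - Complex.I*ξ/2 - 1) * (lgs t : ℂ)
      = (lgs t : ℂ)^(ζ:ℂ) * (lgs t : ℂ)^(-(Complex.I*ξ/2)) := by
    rw [show ((ζ:ℂ) - Complex.I*ξ/2 - 1) = (ζ:ℂ) + (-(Complex.I*ξ/2)) - 1 by ring]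
    exact cpow_helper _ hXne _ _
  have eY : ((1 - (lgs t:ℂ))) ^ ((η:ℂ) + Complex.I*ξ/2 - 1) * (1 - (lgs t:ℂ))
      = (1 - (lgs t:ℂ))^(η:ℂ) * (1 - (lgs t:ℂ))^(Complex.I*ξ/2) := by
    have : ((1 - lgs t : ℝ) : ℂ) = 1 - (lgs t : ℂ) := by push_cast; ring
    rw [← this]
    exact cpow_helper _ hYne _ _
  linear_combination
    (-(((lgs t:ℂ)) ^ ((ζ:ℂ) - Complex.I*ξ/2 - 1) * (lgs t:ℂ)
       * (((1 - (lgs t:ℂ))) ^ ((η:ℂ) + Complex.I*ξ/2 - 1) * (1 - (lgs t:ℂ))))) * e2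
    + (-((2:ℂ)^(ζ:ℂ) * (2:ℂ)^(η:ℂ)
       * (((1 - (lgs t:ℂ))) ^ ((η:ℂ) + Complex.I*ξ/2 - 1) * (1 - (lgs t:ℂ))))) * eX
    + (-((2:ℂ)^(ζ:ℂ) * (2:ℂ)^(η:ℂ)
       * ((lgs t:ℂ)^(ζ:ℂ) * (lgs t:ℂ)^(-(Complex.I*ξ/2))))) * eY

theorem stmt_1 (ζ η ξ : ℝ) (hζ : 0 < ζ) (hη : 0 < η) :
    (∫ t : ℝ, Complex.exp (-Complex.I * ξ * t) *
        (((1 + Real.tanh t) ^ ζ : ℝ) : ℂ) * (((1 - Real.tanh t) ^ η : ℝ) : ℂ))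
      = (2 : ℂ) ^ ((ζ + η - 1 : ℝ) : ℂ) *
        Complex.Gamma ((ζ : ℂ) - Complex.I * ξ / 2) *
        Complex.Gamma ((η : ℂ) + Complex.I * ξ / 2) /
        Complex.Gamma ((ζ : ℂ) + (η : ℂ)) := by
  set u : ℂ := (ζ:ℂ) - Complex.I * ξ / 2 with hu
  set v : ℂ := (η:ℂ) + Complex.I * ξ / 2 with hv
  have hure : 0 < u.re := by rw [hu]; simp [Complex.div_re]; exact hζ
  have hvre : 0 < v.re := by rw [hv]; simp [Complex.div_re]; exact hη
  have hsum : u + v = (ζ:ℂ) + (η:ℂ) := by rw [hu, hv]; ring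
  have hG := Complex.Gamma_mul_Gamma_eq_betaIntegral hure hvre
  rw [hsum] at hG
  have hGne : Complex.Gamma ((ζ:ℂ) + (η:ℂ)) ≠ 0 := by
    apply Complex.Gamma_ne_zero_of_re_pos
    simp
    linarith
  -- beta integral over Ioo
  have hβ : (∫ x in Set.Ioo (0:ℝ) 1, ((x:ℂ))^(u-1) * (((1-x:ℝ)):ℂ)^(v-1))
      = Complex.betaIntegral u v := by
    rw [Complex.betaIntegral, intervalIntegral.integral_of_le zero_le_one,
      integral_Ioc_eq_integral_Ioo]
    push_cast
    rfl
  have hsub := integral_image_eq_integral_abs_deriv_smul MeasurableSet.univ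
      (fun x _ => (lgs_deriv x).hasDerivWithinAt) (lgs_inj.injOn)
      (fun x : ℝ => ((x:ℂ))^(u-1) * (((1-x:ℝ)):ℂ)^(v-1))
  rw [Set.image_univ, lgs_range, MeasureTheory.setIntegral_univ] at hsub
  have hpt : (fun t : ℝ => Complex.exp (-Complex.I * ξ * t) *
        (((1 + Real.tanh t) ^ ζ : ℝ) : ℂ) * (((1 - Real.tanh t) ^ η : ℝ) : ℂ))
      = fun t : ℝ => (2:ℂ)^((ζ+η-1:ℝ):ℂ) *
          ((|2 * Real.exp (-2*t) * (lgs t)^2| : ℝ) •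
            (((lgs t : ℝ):ℂ)^(u - 1) * (((1 - lgs t : ℝ)):ℂ)^(v - 1))) := by
    funext t
    exact key ζ η ξ t
  rw [hpt, MeasureTheory.integral_const_mul, ← hsub, hβ, mul_assoc, hG]
  field_simp
end

section
/- For α > -1 and nonnegative integers m, n, the Laguerre polynomials satisfy ∫_0^∞ L_m^α(t) L_n^α(t) t^α e^{-t} dt = (Γ(α+m+1)/m!) δ_{m,n}. -/
open MeasureTheory

/-- Pochhammer symbol (rising factorial) for real arguments. -/
noncomputable def rpoch (a : ℝ) (k : ℕ) : ℝ := ∏ i ∈ Finset.range k, (a + i)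

/-- The Laguerre polynomial `L_m^α`. -/
noncomputable def lag (α : ℝ) (m : ℕ) (t : ℝ) : ℝ :=
  rpoch (α + 1) m / m.factorial *
    ∑ k ∈ Finset.range (m + 1),
      rpoch (-(m : ℝ)) k / (rpoch (α + 1) k * k.factorial) * t ^ k

lemma rpoch_zero (a : ℝ) : rpoch a 0 = 1 := by simp [rpoch]

lemma rpoch_succ (a : ℝ) (k : ℕ) : rpoch a (k + 1) = rpoch a k * (a + k) := by
  simp [rpoch, Finset.prod_range_succ]

lemma rpoch_succ' (a : ℝ) (k : ℕ) : rpoch a (k + 1) = a * rpoch (a + 1) k := by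
  induction k with
  | zero => simp [rpoch_zero, rpoch_succ]
  | succ k ih =>
    rw [rpoch_succ, ih, rpoch_succ]
    push_cast
    ring

lemma rpoch_add (a : ℝ) (p q : ℕ) : rpoch a (p + q) = rpoch a p * rpoch (a + p) q := by
  induction q with
  | zero => simp [rpoch_zero]
  | succ q ih =>
    rw [← Nat.add_assoc, rpoch_succ, ih, rpoch_succ]
    push_cast
    ring

lemma rpoch_pos {a : ℝ} (ha : 0 < a) (k : ℕ) : 0 < rpoch a k := by
  refine Finset.prod_pos fun i _ => ?_
  positivity

lemma rpoch_neg_nat (m j : ℕ) (h : j ≤ m) :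
    rpoch (-(m : ℝ)) j = (-1) ^ j * (m.choose j) * j.factorial := by
  induction j with
  | zero => simp [rpoch_zero]
  | succ j ih =>
    have hj : j ≤ m := Nat.le_of_succ_le h
    rw [rpoch_succ, ih hj]
    have hc : (m.choose (j+1) : ℝ) * (j+1) = m.choose j * ((m:ℝ) - j) := by
      have := Nat.choose_succ_right_eq m j
      have h2 : ((m.choose (j+1) * (j+1) : ℕ) : ℝ) = ((m.choose j * (m - j) : ℕ) : ℝ) := by
        exact_mod_cast congrArg (Nat.cast : ℕ → ℝ) this
      push_cast [Nat.cast_sub hj] at h2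
      linarith
    have : (-(m:ℝ) + j) = -((m:ℝ) - j) := by ring
    rw [this, Nat.factorial_succ]
    push_cast
    linear_combination ((-1:ℝ)^j * (j.factorial:ℝ)) * hc

lemma gamma_rpoch {a : ℝ} (ha : 0 < a) (k : ℕ) :
    Real.Gamma (a + k) = Real.Gamma a * rpoch a k := by
  induction k with
  | zero => simp [rpoch_zero]
  | succ k ih =>
    have : a + (k + 1 : ℕ) = (a + k) + 1 := by push_cast; ring
    rw [this, Real.Gamma_add_one (by positivity), ih, rpoch_succ]
    ring

lemma alt_pascal (f : ℕ → ℝ) (n : ℕ) :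
    ∑ k ∈ Finset.range (n+2), (-1:ℝ)^k * ((n+1).choose k) * f k
    = ∑ k ∈ Finset.range (n+1), (-1:ℝ)^k * (n.choose k) * (f k - f (k+1)) := by
  have h0 : ∑ k ∈ Finset.range (n+2), (-1:ℝ)^k * ((n+1).choose k) * f k
      = (∑ k ∈ Finset.range (n+1), (-1:ℝ)^(k+1) * ((n+1).choose (k+1)) * f (k+1)) + f 0 := by
    rw [Finset.sum_range_succ']; simp
  have h1 : ∀ k, ((-1:ℝ))^(k+1) * ((n+1).choose (k+1)) * f (k+1)
      = -((-1:ℝ)^k * (n.choose (k+1)) * f (k+1)) - (-1:ℝ)^k * (n.choose k) * f (k+1) := by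
    intro k; rw [Nat.choose_succ_succ]; push_cast; ring
  have h2 : ∑ k ∈ Finset.range (n+1), (-1:ℝ)^k * (n.choose (k+1)) * f (k+1)
      = ∑ k ∈ Finset.range n, (-1:ℝ)^k * (n.choose (k+1)) * f (k+1) := by
    rw [Finset.sum_range_succ]; simp
  have h3 : ∑ k ∈ Finset.range (n+1), (-1:ℝ)^k * (n.choose k) * f k
      = (∑ k ∈ Finset.range n, -((-1:ℝ)^k * (n.choose (k+1)) * f (k+1))) + f 0 := by
    rw [Finset.sum_range_succ']
    congr 1
    · exact Finset.sum_congr rfl fun k _ => by rw [pow_succ]; ring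
    · simp
  rw [h0]
  calc (∑ k ∈ Finset.range (n+1), (-1:ℝ)^(k+1) * ((n+1).choose (k+1)) * f (k+1)) + f 0
      = (∑ k ∈ Finset.range (n+1), (-((-1:ℝ)^k * (n.choose (k+1)) * f (k+1)) - (-1:ℝ)^k * (n.choose k) * f (k+1))) + f 0 := by
        rw [Finset.sum_congr rfl (fun k _ => h1 k)]
    _ = -(∑ k ∈ Finset.range (n+1), (-1:ℝ)^k * (n.choose (k+1)) * f (k+1))
        - (∑ k ∈ Finset.range (n+1), (-1:ℝ)^k * (n.choose k) * f (k+1)) + f 0 := by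
        rw [Finset.sum_sub_distrib, Finset.sum_neg_distrib]
    _ = (∑ k ∈ Finset.range (n+1), (-1:ℝ)^k * (n.choose k) * f k)
        - (∑ k ∈ Finset.range (n+1), (-1:ℝ)^k * (n.choose k) * f (k+1)) := by
        rw [h2, h3]; ring_nf
        rw [Finset.sum_neg_distrib]
        ring
    _ = _ := by rw [← Finset.sum_sub_distrib]; exact Finset.sum_congr rfl fun k _ => by ring

lemma T_rec (n j : ℕ) (x : ℝ) :
    ∑ k ∈ Finset.range (n+2), (-1:ℝ)^k * ((n+1).choose k) * rpoch (x + k) (j+1)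
    = -(j+1 : ℝ) * ∑ k ∈ Finset.range (n+1), (-1:ℝ)^k * (n.choose k) * rpoch ((x+1) + k) j := by
  rw [alt_pascal, Finset.mul_sum]
  refine Finset.sum_congr rfl fun k _ => ?_
  have h1 : rpoch (x + k) (j+1) = (x + k) * rpoch (x + k + 1) j := rpoch_succ' _ _
  have h2 : rpoch (x + ((k:ℕ)+1:ℕ)) (j+1) = rpoch (x + k + 1) j * (x + k + 1 + j) := by
    have he : (x + (((k:ℕ)+1:ℕ) : ℝ)) = x + k + 1 := by push_cast; ring
    rw [he, rpoch_succ]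
  rw [h1, h2]
  have h3 : ((x+1) + (k:ℝ)) = x + k + 1 := by ring
  rw [h3]
  ring

lemma T_eval : ∀ n : ℕ, ∀ j ≤ n, ∀ x : ℝ,
    ∑ k ∈ Finset.range (n+1), (-1:ℝ)^k * (n.choose k) * rpoch (x + k) j
    = if j = n then (-1:ℝ)^n * n.factorial else 0 := by
  intro n
  induction n with
  | zero =>
    intro j hj x
    interval_cases j
    simp [rpoch_zero]
  | succ n ih =>
    intro j hj x
    cases j with
    | zero =>
      simp only [rpoch_zero, mul_one]
      have hz : (∑ k ∈ Finset.range (n+1+1), ((-1:ℤ))^k * ((n+1).choose k)) = 0 := by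
        rw [Int.alternating_sum_range_choose]; simp
      rw [if_neg (by omega)]
      exact_mod_cast congrArg (Int.cast : ℤ → ℝ) hz
    | succ j =>
      rw [T_rec, ih j (by omega) (x+1)]
      by_cases hj' : j = n
      · subst hj'
        rw [if_pos rfl, if_pos rfl]
        rw [Nat.factorial_succ]
        push_cast
        ring
      · rw [if_neg hj', if_neg (by omega)]
        ring

noncomputable def lagc (α : ℝ) (M j : ℕ) : ℝ :=
  rpoch (α+1) M / M.factorial * (rpoch (-(M:ℝ)) j / (rpoch (α+1) j * j.factorial))

lemma lag_eq (α : ℝ) (M : ℕ) (t : ℝ) :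
    lag α M t = ∑ j ∈ Finset.range (M+1), lagc α M j * t ^ j := by
  rw [lag, Finset.mul_sum]
  exact Finset.sum_congr rfl fun j _ => by rw [lagc]; ring

lemma lag_inner_sum (α : ℝ) (hα : -1 < α) (n j : ℕ) (hj : j ≤ n) :
    ∑ k ∈ Finset.range (n+1), lagc α n k * Real.Gamma (α + 1 + ((j + k : ℕ) : ℝ))
    = rpoch (α+1) n / n.factorial * Real.Gamma (α+1) *
        (if j = n then (-1:ℝ)^n * n.factorial else 0) := by
  have hA : (0:ℝ) < α + 1 := by linarith
  have step : ∀ k ∈ Finset.range (n+1),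
      lagc α n k * Real.Gamma (α + 1 + ((j + k : ℕ) : ℝ))
      = rpoch (α+1) n / n.factorial * Real.Gamma (α+1) *
          ((-1:ℝ)^k * (n.choose k) * rpoch ((α+1) + k) j) := by
    intro k hk
    have hkn : k ≤ n := by simpa [Nat.lt_succ_iff] using hk
    have hG : Real.Gamma (α + 1 + ((j + k : ℕ) : ℝ))
        = Real.Gamma (α+1) * (rpoch (α+1) k * rpoch ((α+1) + k) j) := by
      rw [show ((j + k : ℕ) : ℝ) = ((k + j : ℕ) : ℝ) by push_cast; ring,
        gamma_rpoch hA (k + j), rpoch_add]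
    rw [hG, lagc, rpoch_neg_nat n k hkn]
    have h1 : rpoch (α+1) k ≠ 0 := ne_of_gt (rpoch_pos hA k)
    have h2 : (k.factorial : ℝ) ≠ 0 := Nat.cast_ne_zero.2 k.factorial_ne_zero
    field_simp
  rw [Finset.sum_congr rfl step, ← Finset.mul_sum, T_eval n j hj (α+1)]

lemma sum_eval (α : ℝ) (hα : -1 < α) {m n : ℕ} (hmn : m ≤ n) :
    ∑ j ∈ Finset.range (m+1), ∑ k ∈ Finset.range (n+1),
      lagc α m j * lagc α n k * Real.Gamma (α + 1 + ((j + k : ℕ) : ℝ))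
    = if m = n then Real.Gamma (α + m + 1) / m.factorial else 0 := by
  have hA : (0:ℝ) < α + 1 := by linarith
  have step : ∀ j ∈ Finset.range (m+1),
      ∑ k ∈ Finset.range (n+1), lagc α m j * lagc α n k * Real.Gamma (α + 1 + ((j + k : ℕ) : ℝ))
      = lagc α m j * (rpoch (α+1) n / n.factorial * Real.Gamma (α+1) *
          (if j = n then (-1:ℝ)^n * n.factorial else 0)) := by
    intro j hj
    have hjn : j ≤ n := le_trans (by simpa [Nat.lt_succ_iff] using hj) hmn
    rw [← lag_inner_sum α hα n j hjn, Finset.mul_sum]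
    exact Finset.sum_congr rfl fun k _ => by ring
  rw [Finset.sum_congr rfl step]
  rcases lt_or_eq_of_le hmn with hlt | heq
  · rw [if_neg (Nat.ne_of_lt hlt)]
    refine Finset.sum_eq_zero fun j hj => ?_
    have : j ≠ n := by have := Finset.mem_range.1 hj; omega
    rw [if_neg this, mul_zero, mul_zero]
  · subst heq
    rw [if_pos rfl]
    rw [Finset.sum_eq_single m]
    · rw [if_pos rfl, lagc, rpoch_neg_nat m m le_rfl]
      have h1 : rpoch (α+1) m ≠ 0 := ne_of_gt (rpoch_pos hA m)
      have h2 : (m.factorial : ℝ) ≠ 0 := Nat.cast_ne_zero.2 m.factorial_ne_zero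
      have hG : Real.Gamma (α + m + 1) = Real.Gamma (α+1) * rpoch (α+1) m := by
        rw [show α + (m:ℝ) + 1 = (α + 1) + m by ring, gamma_rpoch hA]
      rw [hG]
      have hsq : ((-1:ℝ)^m) * ((-1:ℝ)^m) = 1 := by rw [← mul_pow]; norm_num
      field_simp
      simp only [Nat.choose_self, Nat.cast_one]
      linear_combination hsq
    · intro j hj hne
      rw [if_neg hne, mul_zero, mul_zero]
    · intro h
      exact absurd (Finset.self_mem_range_succ m) h

lemma integral_eval (α : ℝ) (hα : -1 < α) (m n : ℕ) :
    (∫ t in Set.Ioi (0:ℝ), lag α m t * lag α n t * t ^ α * Real.exp (-t))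
    = ∑ j ∈ Finset.range (m+1), ∑ k ∈ Finset.range (n+1),
        lagc α m j * lagc α n k * Real.Gamma (α + 1 + ((j + k : ℕ) : ℝ)) := by
  have hs : ∀ j k : ℕ, (0:ℝ) < α + 1 + ((j + k : ℕ) : ℝ) := by
    intro j k
    have : (0:ℝ) ≤ ((j + k : ℕ) : ℝ) := Nat.cast_nonneg _
    linarith
  have hint : ∀ j k : ℕ, IntegrableOn
      (fun t : ℝ => lagc α m j * lagc α n k * (Real.exp (-t) * t ^ (α + 1 + ((j + k : ℕ) : ℝ) - 1)))
      (Set.Ioi 0) := by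
    intro j k
    exact (Real.GammaIntegral_convergent (hs j k)).const_mul _
  have hpt : Set.EqOn
      (fun t : ℝ => lag α m t * lag α n t * t ^ α * Real.exp (-t))
      (fun t : ℝ => ∑ j ∈ Finset.range (m+1), ∑ k ∈ Finset.range (n+1),
        lagc α m j * lagc α n k * (Real.exp (-t) * t ^ (α + 1 + ((j + k : ℕ) : ℝ) - 1)))
      (Set.Ioi 0) := by
    intro t ht
    have ht' : (0:ℝ) < t := ht
    simp only
    rw [lag_eq, lag_eq, Finset.sum_mul_sum, Finset.sum_mul, Finset.sum_mul]
    refine Finset.sum_congr rfl fun j _ => ?_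
    rw [Finset.sum_mul, Finset.sum_mul]
    refine Finset.sum_congr rfl fun k _ => ?_
    have hp : (t:ℝ)^(j:ℕ) * t^(k:ℕ) * t^α = t ^ (α + 1 + ((j+k:ℕ):ℝ) - 1) := by
      rw [← Real.rpow_natCast t j, ← Real.rpow_natCast t k, ← Real.rpow_add ht',
        ← Real.rpow_add ht']
      congr 1
      push_cast
      ring
    calc lagc α m j * t ^ j * (lagc α n k * t ^ k) * t ^ α * Real.exp (-t)
        = lagc α m j * lagc α n k * (Real.exp (-t) * (t^(j:ℕ) * t^(k:ℕ) * t^α)) := by ring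
      _ = _ := by rw [hp]
  rw [setIntegral_congr_fun measurableSet_Ioi hpt]
  rw [integral_finset_sum _ (fun j _ => integrable_finset_sum _ (fun k _ => hint j k))]
  refine Finset.sum_congr rfl fun j _ => ?_
  rw [integral_finset_sum _ (fun k _ => hint j k)]
  refine Finset.sum_congr rfl fun k _ => ?_
  rw [MeasureTheory.integral_const_mul, ← Real.Gamma_eq_integral (hs j k)]

theorem stmt_3 (α : ℝ) (hα : -1 < α) (m n : ℕ) :
    (∫ t in Set.Ioi (0 : ℝ), lag α m t * lag α n t * t ^ α * Real.exp (-t))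
      = Real.Gamma (α + m + 1) / m.factorial * (if m = n then 1 else 0) := by
  have key : ∀ m' n' : ℕ, m' ≤ n' →
      (∫ t in Set.Ioi (0 : ℝ), lag α m' t * lag α n' t * t ^ α * Real.exp (-t))
      = if m' = n' then Real.Gamma (α + m' + 1) / m'.factorial else 0 := by
    intro m' n' h
    rw [integral_eval α hα, sum_eval α hα h]
  rcases le_or_gt m n with h | h
  · rw [key m n h]
    by_cases he : m = n
    · rw [if_pos he, if_pos he, mul_one]
    · rw [if_neg he, if_neg he, mul_zero]
  · have hfun : (fun t : ℝ => lag α m t * lag α n t * t ^ α * Real.exp (-t))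
        = fun t : ℝ => lag α n t * lag α m t * t ^ α * Real.exp (-t) :=
      funext fun t => by ring
    rw [show (∫ t in Set.Ioi (0:ℝ), lag α m t * lag α n t * t ^ α * Real.exp (-t))
        = ∫ t in Set.Ioi (0:ℝ), lag α n t * lag α m t * t ^ α * Real.exp (-t) by rw [hfun]]
    rw [key n m h.le, if_neg (by omega), if_neg (by omega), mul_zero]
end

section
/- For real parameters with ζ + |k|/2 > 0 and real ξ, for nonnegative integers m ≥ |k|, the integral ∫_0^∞ e^{-u/2} L_{m-|k|}^{|k|+μ+β+(d-1)/2}(u) u^{ζ+|k|/2 - iξ - 1} du equals 2^{ζ+|k|/2-iξ} · ((|k|+μ+β+(d+1)/2)_{m-|k|} / (m-|k|)!) · Γ(ζ+|k|/2-iξ) · ₂F₁(-m+|k|, ζ+|k|/2-iξ; |k|+μ+β+(d+1)/2; 2). -/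
open MeasureTheory

/-- Pochhammer symbol (rising factorial) for complex arguments. -/
noncomputable def cpoch (a : ℂ) (k : ℕ) : ℂ := ∏ i ∈ Finset.range k, (a + i)

open Complex Set in
lemma gamma_scaled {s : ℂ} (hs : 0 < s.re) :
    ∫ u in Ioi (0:ℝ), ((Real.exp (-u/2) : ℝ) : ℂ) * (u:ℂ) ^ (s - 1) = 2 ^ s * Complex.Gamma s := by
  have h := Complex.integral_cpow_mul_exp_neg_mul_Ioi hs (by norm_num : (0:ℝ) < 1/2)
  rw [show (1 / ((1/2:ℝ) : ℂ)) = 2 by norm_num] at h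
  rw [← h]
  refine setIntegral_congr_fun measurableSet_Ioi (fun u hu => ?_)
  rw [Complex.ofReal_exp, mul_comm]
  norm_num
  ring_nf
  exact Or.inl trivial

open Complex Set in
lemma gamma_scaled_int {s : ℂ} (hs : 0 < s.re) :
    IntegrableOn (fun u : ℝ => ((Real.exp (-u/2) : ℝ) : ℂ) * (u:ℂ) ^ (s - 1)) (Ioi 0) := by
  have h := Complex.GammaIntegral_convergent hs
  rw [← mul_zero (1/2 : ℝ),
    ← integrableOn_Ioi_comp_mul_left_iff _ _ (by norm_num : (0:ℝ) < 1/2)] at h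
  refine IntegrableOn.congr_fun (h.const_mul ((2:ℂ) ^ (s-1)))
    (fun t (ht : 0 < t) => ?_) measurableSet_Ioi
  have h2 : ((1/2:ℝ) : ℂ) ^ (s-1) = ((2:ℂ) ^ (s-1))⁻¹ := by
    rw [show ((1/2:ℝ):ℂ) = (2:ℂ)⁻¹ by norm_num, inv_cpow]
    rw [show (2:ℂ) = ((2:ℝ):ℂ) by norm_num, Complex.arg_ofReal_of_nonneg (by norm_num)]
    exact Real.pi_ne_zero.symm
  have h3 : ((2:ℂ) ^ (s-1)) ≠ 0 := by
    simp [Complex.cpow_eq_zero_iff]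
  rw [ofReal_mul, mul_cpow_ofReal_nonneg (by norm_num) ht.le, h2]
  rw [show -(1/2 * t) = -t/2 by ring]
  field_simp

lemma Gamma_cpoch {s : ℂ} (hs : 0 < s.re) (k : ℕ) :
    Complex.Gamma (s + k) = cpoch s k * Complex.Gamma s := by
  induction k with
  | zero => simp [cpoch]
  | succ k ih =>
    have hne : s + k ≠ 0 := by
      intro h
      have : (s + k).re = 0 := by rw [h]; simp
      simp only [Complex.add_re, Complex.natCast_re] at this
      have : (0:ℝ) < s.re + k := by positivity
      linarith
    rw [show s + (k+1 : ℕ) = (s + k) + 1 by push_cast; ring, Complex.Gamma_add_one _ hne, ih]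
    rw [cpoch, cpoch, Finset.prod_range_succ]
    ring

lemma cpoch_ofReal (a : ℝ) (k : ℕ) : cpoch (a:ℂ) k = ((rpoch a k : ℝ) : ℂ) := by
  simp [cpoch, rpoch]

theorem stmt_8 (ζ μ β ξ : ℝ) (d K m : ℕ) (hK : K ≤ m)
    (hζ : 0 < ζ + (K : ℝ) / 2) (hb : 0 < (K : ℝ) + μ + β + ((d : ℝ) + 1) / 2) :
    (∫ u in Set.Ioi (0 : ℝ),
        ((Real.exp (-u / 2) * lag ((K : ℝ) + μ + β + ((d : ℝ) - 1) / 2) (m - K) u : ℝ) : ℂ) *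
          (u : ℂ) ^ (((ζ : ℂ) + (K : ℂ) / 2) - Complex.I * ξ - 1))
      = (2 : ℂ) ^ (((ζ : ℂ) + (K : ℂ) / 2) - Complex.I * ξ) *
        (cpoch ((K : ℂ) + μ + β + ((d : ℂ) + 1) / 2) (m - K) / (m - K).factorial) *
        Complex.Gamma (((ζ : ℂ) + (K : ℂ) / 2) - Complex.I * ξ) *
        ∑ j ∈ Finset.range (m - K + 1),
          cpoch (-((m - K : ℕ) : ℂ)) j *
            cpoch (((ζ : ℂ) + (K : ℂ) / 2) - Complex.I * ξ) j /
            (cpoch ((K : ℂ) + μ + β + ((d : ℂ) + 1) / 2) j * j.factorial) * 2 ^ j := by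
  set s : ℂ := ((ζ : ℂ) + (K : ℂ) / 2) - Complex.I * ξ with hsdef
  set n : ℕ := m - K with hndef
  set α : ℝ := (K : ℝ) + μ + β + ((d : ℝ) - 1) / 2 with hαdef
  have hs : 0 < s.re := by
    have : s.re = ζ + (K : ℝ) / 2 := by
      simp [hsdef]
    linarith
  have hsk : ∀ k : ℕ, 0 < (s + k).re := by
    intro k
    simp only [Complex.add_re, Complex.natCast_re]
    positivity
  have hcb : ((K : ℂ) + μ + β + ((d : ℂ) + 1) / 2) = ((α + 1 : ℝ) : ℂ) := by
    push_cast [hαdef]; ring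
  have key : Set.EqOn
      (fun u : ℝ => ((Real.exp (-u / 2) * lag α n u : ℝ) : ℂ) * (u : ℂ) ^ (s - 1))
      (fun u : ℝ => ∑ k ∈ Finset.range (n + 1),
          ((rpoch (α + 1) n / n.factorial : ℝ) : ℂ) *
            ((rpoch (-(n : ℝ)) k / (rpoch (α + 1) k * k.factorial) : ℝ) : ℂ) *
            (((Real.exp (-u / 2) : ℝ) : ℂ) * (u : ℂ) ^ (s + k - 1)))
      (Set.Ioi 0) := by
    intro u hu
    have hu0 : (u : ℂ) ≠ 0 := Complex.ofReal_ne_zero.mpr (ne_of_gt hu)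
    have hpow : ∀ k : ℕ, (u : ℂ) ^ (s + k - 1) = (u : ℂ) ^ (s - 1) * (u : ℂ) ^ k := by
      intro k
      rw [show s + k - 1 = (s - 1) + k by ring, Complex.cpow_add _ _ hu0, Complex.cpow_natCast]
    simp only [hpow, lag]
    push_cast
    simp only [Finset.mul_sum, Finset.sum_mul]
    refine Finset.sum_congr rfl fun k _ => by ring
  rw [MeasureTheory.setIntegral_congr_fun measurableSet_Ioi key]
  rw [MeasureTheory.integral_finset_sum _ (fun k _ => (gamma_scaled_int (hsk k)).const_mul _)]
  simp only [integral_const_mul]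
  have hval : ∀ k : ℕ, (∫ u in Set.Ioi (0:ℝ), ((Real.exp (-u/2) : ℝ) : ℂ) * (u:ℂ) ^ (s + k - 1))
      = 2 ^ (s + k) * Complex.Gamma (s + k) := fun k => gamma_scaled (hsk k)
  simp only [hval]
  rw [Finset.mul_sum]
  refine Finset.sum_congr rfl fun k _ => ?_
  rw [Complex.cpow_add _ _ two_ne_zero, Complex.cpow_natCast, Gamma_cpoch hs k, hcb,
    cpoch_ofReal, cpoch_ofReal, show (-((n : ℕ) : ℂ)) = ((-(n : ℝ) : ℝ) : ℂ) by push_cast; ring,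
    cpoch_ofReal]
  push_cast
  ring
end
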